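/- Given a belief function Bel on a finite set W, the Choquet expectation E_Bel is the unique functional E on gambles that is superadditive, positively affinely homogeneous, monotone, comonotonically additive, satisfies the inclusion-exclusion inequality E(∨_i X_i) ≥ Σ_{∅≠I}(−1)^{|I|+1}E(∧_{j∈I}X_j), and satisfies E(1_U) = Bel(U) for all U ⊆ W. -/

import Mathlib

/-- The Choquet expectation of a gamble `X` with respect to a set function `ν`,
computed from the sorted image `x_1 < ... < x_n` of `X` as
`x_1 + Σ_{i≥2} (x_i - x_{i-1}) ν(X > x_{i-1})`. -/
noncomputable def choquet {W : Type*} [Fintype W] (ν : Set W → ℝ) (X : W → ℝ) : ℝ :=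
  let l := (Finset.univ.image X).sort (· ≤ ·)
  l.headI + ((l.zip l.tail).map (fun p => (p.2 - p.1) * ν {w | X w > p.1})).sum

/-- The properties of an expectation functional in Corollary 2.13: superadditive,
positively affinely homogeneous, monotone, comonotonically additive, satisfying the
inclusion-exclusion inequality, and agreeing with `Bel` on indicator functions. -/
def goodFunctional {W : Type*} [Fintype W] (Bel : Set W → ℝ) (E : (W → ℝ) → ℝ) : Prop :=
  (∀ X Y : W → ℝ, E (X + Y) ≥ E X + E Y) ∧
  (∀ (X : W → ℝ) (a b : ℝ), 0 ≤ a → E (fun w => a * X w + b) = a * E X + b) ∧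
  (∀ X Y : W → ℝ, (∀ w, X w ≤ Y w) → E X ≤ E Y) ∧
  (∀ X Y : W → ℝ,
    (∀ w w', (X w - X w') * (Y w - Y w') ≥ 0) → E (X + Y) = E X + E Y) ∧
  (∀ (n : ℕ) (X : Fin (n + 1) → W → ℝ),
    E (fun w => Finset.univ.sup' Finset.univ_nonempty (fun i => X i w)) ≥
      ∑ I : Finset (Fin (n + 1)),
        if h : I.Nonempty then
          (-1 : ℝ) ^ (I.card + 1) * E (fun w => I.inf' h (fun j => X j w))
        else 0) ∧
  (∀ U : Set W, E (Set.indicator U (fun _ => (1 : ℝ))) = Bel U)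


set_option linter.unusedSectionVars false

open Finset

section Aux

lemma supinf {ι : Type*} [DecidableEq ι] (s : Finset ι) (hs : s.Nonempty) (a : ι → ℝ) :
    s.sup' hs a = ∑ I ∈ s.powerset, if h : I.Nonempty then (-1:ℝ)^(I.card+1) * I.inf' h a else 0 := by
  induction hs using Finset.Nonempty.cons_induction generalizing a with
  | singleton i =>
      have hp : ({i} : Finset ι).powerset = {∅, {i}} := by
        ext J; simp [Finset.subset_singleton_iff]
      rw [hp, Finset.sum_insert (fun h => (Finset.singleton_ne_empty i) ((Finset.mem_singleton.1 h).symm)), Finset.sum_singleton]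
      simp
  | cons i t hi ht ih =>
      have key : ∀ b : ι → ℝ, ∑ I ∈ t.powerset, (if h : I.Nonempty then (-1:ℝ)^(I.card+1) * I.inf' h b else 0) = t.sup' ht b := fun b => (ih b).symm
      rw [Finset.sup'_cons (H := ht), Finset.cons_eq_insert, Finset.sum_powerset_insert hi, key a]
      have h2 : ∑ I ∈ t.powerset, (if h : (insert i I).Nonempty then (-1:ℝ)^((insert i I).card+1) * (insert i I).inf' h a else 0)
          = a i + ∑ I ∈ t.powerset, (if h : I.Nonempty then (-1:ℝ)^(I.card+1+1) * (a i ⊓ I.inf' h a) else 0) := by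
        rw [← Finset.sum_erase_add _ _ (Finset.empty_mem_powerset t), add_comm,
          ← Finset.sum_erase (t.powerset)
            (f := fun I => if h : I.Nonempty then (-1:ℝ)^(I.card+1+1) * (a i ⊓ I.inf' h a) else 0)
            (a := ∅) (by simp)]
        congr 1
        · simp
        · refine Finset.sum_congr rfl fun I hI => ?_
          rw [Finset.mem_erase, Finset.mem_powerset] at hI
          have hIn : I.Nonempty := Finset.nonempty_iff_ne_empty.2 hI.1
          have hiI : i ∉ I := fun hmem => hi (hI.2 hmem)
          rw [dif_pos (Finset.insert_nonempty i I), dif_pos hIn,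
            Finset.card_insert_of_notMem hiI, Finset.inf'_insert (H := hIn)]
      rw [h2]
      have h3 : ∑ I ∈ t.powerset, (if h : I.Nonempty then (-1:ℝ)^(I.card+1+1) * (a i ⊓ I.inf' h a) else 0)
          = - t.sup' ht (fun j => a i ⊓ a j) := by
        rw [← key (fun j => a i ⊓ a j), ← Finset.sum_neg_distrib]
        refine Finset.sum_congr rfl fun I hI => ?_
        by_cases h : I.Nonempty
        · rw [dif_pos h, dif_pos h, pow_succ]
          have : I.inf' h (fun j => a i ⊓ a j) = a i ⊓ I.inf' h a := by
            rw [apply_inf'_eq_inf'_comp h (g := fun x => a i ⊓ x) (fun x y => inf_inf_distrib_left _ _ _)]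
            rfl
          rw [this]; ring
        · simp [h]
      have h4 : t.sup' ht (fun j => a i ⊓ a j) = a i ⊓ t.sup' ht a := by
        rw [comp_sup'_eq_sup'_comp ht (g := fun x => a i ⊓ x) (fun x y => inf_sup_left _ _ _)]
        rfl
      rw [h3, h4]
      have := max_add_min (a i) (t.sup' ht a)
      linarith

variable {W : Type*} [Fintype W] [DecidableEq W]

noncomputable def mob (Bel : Set W → ℝ) (A : Finset W) : ℝ :=
  ∑ B ∈ A.powerset, (-1:ℝ)^(A.card - B.card) * Bel ↑B

lemma neg_one_sum (s : Finset W) :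
    ∑ D ∈ s.powerset, (-1:ℝ)^D.card = if s = ∅ then 1 else 0 := by
  classical
  have h := Finset.sum_powerset_neg_one_pow_card (x := s)
  exact_mod_cast h

lemma mob_sum (Bel : Set W → ℝ) (A : Finset W) :
    ∑ B ∈ A.powerset, mob Bel B = Bel ↑A := by
  classical
  unfold mob
  rw [Finset.sum_comm' (s' := fun C => A.powerset.filter (fun B => C ⊆ B)) (t' := A.powerset)
    (by
      intro B C
      simp only [Finset.mem_filter, Finset.mem_powerset]
      exact ⟨fun ⟨h1, h2⟩ => ⟨⟨h1, h2⟩, h2.trans h1⟩, fun ⟨⟨h1, h2⟩, _⟩ => ⟨h1, h2⟩⟩)]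
  have key : ∀ C ∈ A.powerset,
      (∑ B ∈ A.powerset.filter (fun B => C ⊆ B), (-1:ℝ)^(B.card - C.card) * Bel ↑C)
      = if C = A then Bel ↑A else 0 := by
    intro C hC
    rw [Finset.mem_powerset] at hC
    have reidx : (∑ B ∈ A.powerset.filter (fun B => C ⊆ B), (-1:ℝ)^(B.card - C.card) * Bel ↑C)
        = ∑ D ∈ (A \ C).powerset, (-1:ℝ)^D.card * Bel ↑C := by
      refine Finset.sum_nbij' (fun B => B \ C) (fun D => C ∪ D) ?_ ?_ ?_ ?_ ?_
      · intro B hB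
        rw [Finset.mem_filter, Finset.mem_powerset] at hB
        exact Finset.mem_powerset.2 (Finset.sdiff_subset_sdiff hB.1 Finset.Subset.rfl)
      · intro D hD
        rw [Finset.mem_powerset] at hD
        rw [Finset.mem_filter, Finset.mem_powerset]
        exact ⟨Finset.union_subset hC (hD.trans (Finset.sdiff_subset)), Finset.subset_union_left⟩
      · intro B hB
        rw [Finset.mem_filter] at hB
        exact Finset.union_sdiff_of_subset hB.2
      · intro D hD
        rw [Finset.mem_powerset] at hD
        exact Finset.union_sdiff_cancel_left
          (Finset.disjoint_left.2 (fun x hxC hxD => (Finset.mem_sdiff.1 (hD hxD)).2 hxC))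
      · intro B hB
        rw [Finset.mem_filter] at hB
        rw [Finset.card_sdiff_of_subset hB.2]
    rw [reidx, ← Finset.sum_mul, neg_one_sum]
    by_cases h : C = A
    · subst h; simp
    · rw [if_neg (fun e => h (Finset.Subset.antisymm hC (Finset.sdiff_eq_empty_iff_subset.mp e))),
        zero_mul, if_neg h]
  rw [Finset.sum_congr rfl key, Finset.sum_ite_eq' A.powerset A (fun _ => Bel ↑A),
    if_pos (Finset.mem_powerset_self A)]

lemma mob_nonneg (Bel : Set W → ℝ) (h0 : Bel ∅ = 0) (hr : ∀ U, 0 ≤ Bel U)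
    (hB3 : ∀ (n : ℕ) (U : Fin n → Set W),
      Bel (⋃ i, U i) ≥ ∑ I : Finset (Fin n),
        if I.Nonempty then (-1 : ℝ) ^ (I.card + 1) * Bel (⋂ j ∈ I, U j) else 0)
    (A : Finset W) (hA : A.Nonempty) : 0 ≤ mob Bel A := by
  classical
  rcases eq_or_lt_of_le (Finset.one_le_card.2 hA) with h1 | h2
  · -- A is a singleton
    obtain ⟨w, rfl⟩ := Finset.card_eq_one.1 h1.symm
    have hp : ({w} : Finset W).powerset = {∅, {w}} := by
      ext J; simp [Finset.subset_singleton_iff]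
    rw [mob, hp, Finset.sum_insert (fun h => (Finset.singleton_ne_empty w) ((Finset.mem_singleton.1 h).symm)),
      Finset.sum_singleton]
    simp [h0]
    exact hr _
  · -- A.card ≥ 2
    set k := A.card with hk
    have hk2 : 2 ≤ k := h2
    set e : Fin k → W := fun i => (A.equivFin.symm i : W) with he
    have heinj : Function.Injective e := fun i j h => by
      have := A.equivFin.symm.injective (Subtype.ext h); exact this
    have heA : ∀ i, e i ∈ A := fun i => (A.equivFin.symm i).2
    have hesurj : ∀ x ∈ A, ∃ i, e i = x := fun x hx =>
      ⟨A.equivFin ⟨x, hx⟩, by simp [he]⟩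
    set U : Fin k → Set W := fun i => (↑A : Set W) \ {e i} with hU
    have hunion : (⋃ i, U i) = ↑A := by
      ext x
      simp only [Set.mem_iUnion, hU, Set.mem_diff, Set.mem_singleton_iff, Finset.mem_coe]
      constructor
      · rintro ⟨i, hxA, -⟩; exact hxA
      · intro hx
        obtain ⟨i0, hi0⟩ := hesurj x hx
        have : Nontrivial (Fin k) := Fin.nontrivial_iff_two_le.2 hk2
        obtain ⟨i1, hi1⟩ := exists_ne i0
        exact ⟨i1, hx, fun hxe => hi1 (heinj (by rw [hi0, hxe]))⟩
    have hinter : ∀ I : Finset (Fin k), I.Nonempty →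
        (⋂ j ∈ I, U j) = ↑(A \ I.image e) := by
      intro I hI
      ext x
      simp only [Set.mem_iInter, hU, Set.mem_diff, Set.mem_singleton_iff, Finset.coe_sdiff,
        Finset.mem_coe, Finset.mem_sdiff, Finset.mem_image]
      constructor
      · intro h
        obtain ⟨j0, hj0⟩ := hI
        exact ⟨(h j0 hj0).1, fun ⟨j, hj, hej⟩ => (h j hj).2 hej.symm⟩
      · rintro ⟨hxA, hn⟩ j hj
        exact ⟨hxA, fun hx => hn ⟨j, hj, hx.symm⟩⟩
    have hbel := hB3 k U
    rw [hunion] at hbel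
    -- rewrite the sum
    have hsum : (∑ I : Finset (Fin k),
        if I.Nonempty then (-1 : ℝ) ^ (I.card + 1) * Bel (⋂ j ∈ I, U j) else 0)
        = ∑ B ∈ A.powerset.erase A, (-1:ℝ)^(k - B.card + 1) * Bel ↑B := by
      rw [← Finset.sum_filter]
      refine Finset.sum_nbij' (i := fun I => A \ I.image e)
        (j := fun B => Finset.univ.filter (fun i => e i ∉ B)) ?_ ?_ ?_ ?_ ?_
      · intro I hI
        rw [Finset.mem_filter] at hI
        rw [Finset.mem_erase, Finset.mem_powerset]
        refine ⟨?_, Finset.sdiff_subset⟩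
        intro hEq
        obtain ⟨j0, hj0⟩ := hI.2
        have h1 : e j0 ∈ I.image e := Finset.mem_image_of_mem e hj0
        have h2 : e j0 ∈ A \ I.image e := by rw [hEq]; exact heA j0
        exact (Finset.mem_sdiff.1 h2).2 h1
      · intro B hB
        rw [Finset.mem_erase, Finset.mem_powerset] at hB
        rw [Finset.mem_filter]
        obtain ⟨x, hxA, hxB⟩ := Finset.exists_of_ssubset (lt_of_le_of_ne hB.2 hB.1)
        obtain ⟨i, rfl⟩ := hesurj x hxA
        exact ⟨Finset.mem_univ _, ⟨i, Finset.mem_filter.2 ⟨Finset.mem_univ _, hxB⟩⟩⟩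
      · intro I hI
        show Finset.univ.filter (fun i => e i ∉ A \ I.image e) = I
        ext i
        simp only [Finset.mem_filter, Finset.mem_univ, true_and, Finset.mem_sdiff, not_and,
          not_not]
        constructor
        · intro h
          obtain ⟨j, hj, hej⟩ := Finset.mem_image.1 (h (heA i))
          exact heinj hej ▸ hj
        · intro hi _
          exact Finset.mem_image_of_mem e hi
      · intro B hB
        rw [Finset.mem_erase, Finset.mem_powerset] at hB
        have himg : (Finset.univ.filter (fun i => e i ∉ B)).image e = A \ B := by
          ext x
          simp only [Finset.mem_image, Finset.mem_filter, Finset.mem_univ, true_and,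
            Finset.mem_sdiff]
          constructor
          · rintro ⟨i, hiB, rfl⟩; exact ⟨heA i, hiB⟩
          · rintro ⟨hxA, hxB⟩
            obtain ⟨i, rfl⟩ := hesurj x hxA
            exact ⟨i, hxB, rfl⟩
        show A \ (Finset.univ.filter (fun i => e i ∉ B)).image e = B
        rw [himg, Finset.sdiff_sdiff_self_left, Finset.inter_eq_right.2 hB.2]
      · intro I hI
        rw [Finset.mem_filter] at hI
        have hsub : I.image e ⊆ A := fun x hx => by
          obtain ⟨i, _, rfl⟩ := Finset.mem_image.1 hx; exact heA i
        have hcard : (A \ I.image e).card = k - I.card := by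
          rw [Finset.card_sdiff_of_subset hsub, Finset.card_image_of_injective I heinj]
        have hle : I.card ≤ k := by
          rw [← Finset.card_image_of_injective I heinj]
          exact Finset.card_le_card hsub
        rw [hinter I hI.2, hcard, Nat.sub_sub_self hle]
    rw [hsum] at hbel
    have hmob : mob Bel A = (∑ B ∈ A.powerset.erase A, (-1:ℝ)^(k - B.card) * Bel ↑B) + Bel ↑A := by
      rw [mob, ← Finset.sum_erase_add _ _ (Finset.mem_powerset_self A), Nat.sub_self, pow_zero,
        one_mul]
    have hneg : (∑ B ∈ A.powerset.erase A, (-1:ℝ)^(k - B.card + 1) * Bel ↑B)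
        = -∑ B ∈ A.powerset.erase A, (-1:ℝ)^(k - B.card) * Bel ↑B := by
      rw [← Finset.sum_neg_distrib]
      exact Finset.sum_congr rfl fun B _ => by rw [pow_succ]; ring
    rw [hneg] at hbel
    rw [hmob]
    linarith

noncomputable def FF (Bel : Set W → ℝ) (X : W → ℝ) : ℝ :=
  ∑ A : Finset W, if h : A.Nonempty then mob Bel A * A.inf' h X else 0

lemma sum_mob (Bel : Set W → ℝ) (h0 : Bel ∅ = 0) (S : Finset W) :
    ∑ A : Finset W, (if A.Nonempty ∧ A ⊆ S then mob Bel A else 0) = Bel ↑S := by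
  classical
  rw [← mob_sum Bel S, ← Finset.sum_filter]
  have hfil : Finset.univ.filter (fun A : Finset W => A.Nonempty ∧ A ⊆ S) = S.powerset.erase ∅ := by
    ext A
    simp [Finset.mem_powerset, Finset.nonempty_iff_ne_empty, and_comm]
  rw [hfil]
  rw [← Finset.sum_erase_add _ _ (Finset.empty_mem_powerset S)]
  have : mob Bel ∅ = 0 := by
    rw [mob]; simp [h0]
  rw [this, add_zero]

open Classical in
lemma inf'_indicator (U : Set W) (A : Finset W) (h : A.Nonempty) :
    A.inf' h (Set.indicator U (fun _ => (1:ℝ))) = if ↑A ⊆ U then 1 else 0 := by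
  by_cases hAU : (↑A : Set W) ⊆ U
  · rw [if_pos hAU]
    have : A.inf' h (Set.indicator U (fun _ => (1:ℝ))) = A.inf' h (fun _ => (1:ℝ)) :=
      Finset.inf'_congr h rfl (fun x hx => Set.indicator_of_mem (hAU hx) _)
    rw [this]
    exact Finset.inf'_const _ _
  · rw [if_neg hAU]
    obtain ⟨w, hwA, hwU⟩ : ∃ w ∈ A, w ∉ U := by
      by_contra hc
      push_neg at hc
      exact hAU (fun x hx => hc x hx)
    refine le_antisymm ?_ ?_
    · calc A.inf' h (Set.indicator U (fun _ => (1:ℝ))) ≤ _ := Finset.inf'_le _ hwA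
        _ = 0 := Set.indicator_of_notMem hwU _
    · exact Finset.le_inf' _ _ (fun x _ => Set.indicator_nonneg (fun _ _ => zero_le_one) _)

lemma inf'_add_comonotone (A : Finset W) (h : A.Nonempty) (X Y : W → ℝ)
    (hc : ∀ w w', (X w - X w') * (Y w - Y w') ≥ 0) :
    A.inf' h (fun w => X w + Y w) = A.inf' h X + A.inf' h Y := by
  refine le_antisymm ?_ (Finset.le_inf' _ _ (fun w hw =>
    add_le_add (Finset.inf'_le _ hw) (Finset.inf'_le _ hw)))
  obtain ⟨w0, hw0, e0⟩ := Finset.exists_mem_eq_inf' h X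
  obtain ⟨w1, hw1, e1⟩ := Finset.exists_mem_eq_inf' h Y
  have hX01 : X w0 ≤ X w1 := e0 ▸ Finset.inf'_le _ hw1
  have hY10 : Y w1 ≤ Y w0 := e1 ▸ Finset.inf'_le _ hw0
  have := hc w0 w1
  have hcase : X w0 = X w1 ∨ Y w0 = Y w1 := by
    rcases eq_or_lt_of_le hX01 with h' | h'
    · exact Or.inl h'
    · rcases eq_or_lt_of_le hY10 with h'' | h''
      · exact Or.inr h''.symm
      · nlinarith
  rcases hcase with h' | h'
  · calc A.inf' h (fun w => X w + Y w) ≤ X w1 + Y w1 := Finset.inf'_le _ hw1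
      _ = A.inf' h X + A.inf' h Y := by rw [← h', e0, e1]
  · calc A.inf' h (fun w => X w + Y w) ≤ X w0 + Y w0 := Finset.inf'_le _ hw0
      _ = A.inf' h X + A.inf' h Y := by rw [e0, e1, h']

theorem good_FF (Bel : Set W → ℝ) (h0 : Bel ∅ = 0) (h1 : Bel Set.univ = 1)
    (hmob : ∀ A : Finset W, A.Nonempty → 0 ≤ mob Bel A) :
    goodFunctional Bel (FF Bel) := by
  have hFFmono : ∀ X Y : W → ℝ, (∀ w, X w ≤ Y w) → FF Bel X ≤ FF Bel Y := by
    intro X Y hXY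
    refine Finset.sum_le_sum (fun A _ => ?_)
    by_cases h : A.Nonempty
    · rw [dif_pos h, dif_pos h]
      refine mul_le_mul_of_nonneg_left ?_ (hmob A h)
      exact Finset.le_inf' _ _ (fun w hw => (Finset.inf'_le _ hw).trans (hXY w))
    · simp [h]
  refine ⟨?_, ?_, hFFmono, ?_, ?_, ?_⟩
  · -- superadditive
    intro X Y
    rw [ge_iff_le, FF, FF, FF, ← Finset.sum_add_distrib]
    refine Finset.sum_le_sum (fun A _ => ?_)
    by_cases h : A.Nonempty
    · rw [dif_pos h, dif_pos h, dif_pos h, ← mul_add]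
      refine mul_le_mul_of_nonneg_left ?_ (hmob A h)
      refine Finset.le_inf' _ _ (fun w hw => ?_)
      have : (X + Y) w = X w + Y w := rfl
      rw [this]
      exact add_le_add (Finset.inf'_le _ hw) (Finset.inf'_le _ hw)
    · rw [dif_neg h, dif_neg h, dif_neg h, add_zero]
  · -- affine homogeneity
    intro X a b ha
    have key : ∀ A : Finset W, (h : A.Nonempty) →
        A.inf' h (fun w => a * X w + b) = a * A.inf' h X + b := by
      intro A h
      have hmono : ∀ x y : ℝ, (fun t => a * t + b) (x ⊓ y) = (fun t => a * t + b) x ⊓ (fun t => a * t + b) y := by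
        intro x y
        have : Monotone (fun t : ℝ => a * t + b) := fun s t hst => by
          simp only; nlinarith
        exact this.map_min
      exact (apply_inf'_eq_inf'_comp h (g := fun t => a * t + b) hmono).symm
    have hone : ∑ A : Finset W, (if A.Nonempty then mob Bel A else 0) = 1 := by
      have := sum_mob Bel h0 Finset.univ
      rw [Finset.coe_univ, h1] at this
      rw [← this]
      exact Finset.sum_congr rfl (fun A _ => by simp [Finset.subset_univ])
    calc FF Bel (fun w => a * X w + b)
        = ∑ A : Finset W, ((if h : A.Nonempty then a * (mob Bel A * A.inf' h X) else 0)
            + (if A.Nonempty then b * mob Bel A else 0)) := by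
          refine Finset.sum_congr rfl (fun A _ => ?_)
          by_cases h : A.Nonempty
          · rw [dif_pos h, dif_pos h, if_pos h, key A h]; ring
          · rw [dif_neg h, dif_neg h, if_neg h, add_zero]
      _ = a * FF Bel X + b := by
          rw [Finset.sum_add_distrib]
          congr 1
          · rw [FF, Finset.mul_sum]
            exact Finset.sum_congr rfl fun A _ => by by_cases h : A.Nonempty <;> simp [h]
          · have : ∑ A : Finset W, (if A.Nonempty then b * mob Bel A else 0)
                = b * ∑ A : Finset W, (if A.Nonempty then mob Bel A else 0) := by
              rw [Finset.mul_sum]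
              exact Finset.sum_congr rfl fun A _ => by by_cases h : A.Nonempty <;> simp [h]
            rw [this, hone, mul_one]
  · -- comonotone additivity
    intro X Y hc
    rw [FF, FF, FF, ← Finset.sum_add_distrib]
    refine Finset.sum_congr rfl (fun A _ => ?_)
    by_cases h : A.Nonempty
    · rw [dif_pos h, dif_pos h, dif_pos h, ← mul_add]
      congr 1
      have : A.inf' h (X + Y) = A.inf' h (fun w => X w + Y w) := rfl
      rw [this, inf'_add_comonotone A h X Y hc]
    · rw [dif_neg h, dif_neg h, dif_neg h, add_zero]
  · -- inclusion-exclusion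
    intro n X
    rw [ge_iff_le]
    have hrw : ∀ I : Finset (Fin (n+1)),
        (if h : I.Nonempty then
          (-1 : ℝ) ^ (I.card + 1) * FF Bel (fun w => I.inf' h (fun j => X j w))
        else 0)
        = ∑ A : Finset W, (if hh : I.Nonempty ∧ A.Nonempty then
            mob Bel A * ((-1:ℝ)^(I.card+1) * I.inf' hh.1 (fun j => A.inf' hh.2 (X j))) else 0) := by
      intro I
      by_cases h : I.Nonempty
      · rw [dif_pos h, FF, Finset.mul_sum]
        refine Finset.sum_congr rfl (fun A _ => ?_)
        by_cases hA : A.Nonempty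
        · rw [dif_pos hA, dif_pos ⟨h, hA⟩]
          rw [Finset.inf'_comm hA h (fun w j => X j w)]
          ring
        · rw [dif_neg hA, dif_neg (fun hh => hA hh.2), mul_zero]
      · rw [dif_neg h]
        rw [eq_comm, Finset.sum_eq_zero]
        intro A _
        rw [dif_neg (fun hh => h hh.1)]
    rw [Finset.sum_congr rfl (fun I _ => hrw I), Finset.sum_comm]
    refine Finset.sum_le_sum (fun A _ => ?_)
    by_cases hA : A.Nonempty
    · rw [dif_pos hA]
      have hsum : ∑ I : Finset (Fin (n+1)), (if hh : I.Nonempty ∧ A.Nonempty then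
            mob Bel A * ((-1:ℝ)^(I.card+1) * I.inf' hh.1 (fun j => A.inf' hh.2 (X j))) else 0)
          = mob Bel A * Finset.univ.sup' Finset.univ_nonempty (fun i => A.inf' hA (X i)) := by
        rw [supinf Finset.univ Finset.univ_nonempty (fun i => A.inf' hA (X i)),
          Finset.powerset_univ, Finset.mul_sum]
        refine Finset.sum_congr rfl (fun I _ => ?_)
        by_cases h : I.Nonempty
        · rw [dif_pos ⟨h, hA⟩, dif_pos h]
        · rw [dif_neg (fun hh => h hh.1), dif_neg h, mul_zero]
      rw [hsum]
      refine mul_le_mul_of_nonneg_left ?_ (hmob A hA)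
      refine Finset.sup'_le _ _ (fun i _ => ?_)
      refine Finset.le_inf' _ _ (fun w hw => ?_)
      exact (Finset.inf'_le _ hw).trans (Finset.le_sup' (fun i => X i w) (Finset.mem_univ i))
    · rw [dif_neg hA, Finset.sum_eq_zero]
      intro I _
      rw [dif_neg (fun hh => hA hh.2)]
  · -- indicator
    intro U
    classical
    rw [FF]
    have : ∀ A : Finset W, (if h : A.Nonempty then mob Bel A * A.inf' h (Set.indicator U (fun _ => (1:ℝ))) else 0)
        = (if A.Nonempty ∧ A ⊆ U.toFinset then mob Bel A else 0) := by
      intro A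
      by_cases h : A.Nonempty
      · rw [dif_pos h, inf'_indicator U A h]
        by_cases hAU : (↑A : Set W) ⊆ U
        · rw [if_pos hAU, mul_one, if_pos ⟨h, fun x hx => Set.mem_toFinset.2 (hAU hx)⟩]
        · rw [if_neg hAU, mul_zero, if_neg (fun hh => hAU (fun x hx => Set.mem_toFinset.1 (hh.2 hx)))]
      · rw [dif_neg h, if_neg (fun hh => h hh.1)]
    rw [Finset.sum_congr rfl (fun A _ => this A), sum_mob Bel h0 U.toFinset, Set.coe_toFinset]

end Aux

lemma choquet_eq {W : Type*} [Fintype W] (ν : Set W → ℝ) (X : W → ℝ) :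
    choquet ν X = ((Finset.univ.image X).sort (· ≤ ·)).headI +
      ((((Finset.univ.image X).sort (· ≤ ·)).zip ((Finset.univ.image X).sort (· ≤ ·)).tail).map
        (fun p => (p.2 - p.1) * ν {w | X w > p.1})).sum := rfl

lemma sort_min_cons (s : Finset ℝ) (hs : s.Nonempty) :
    s.sort (· ≤ ·) = s.min' hs :: (s.erase (s.min' hs)).sort (· ≤ ·) := by
  classical
  conv_lhs => rw [← Finset.insert_erase (s.min'_mem hs)]
  exact Finset.sort_insert _ (fun b hb => s.min'_le b (Finset.mem_of_mem_erase hb))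
    (Finset.notMem_erase _ _)

theorem uniq {W : Type*} [Fintype W] [Nonempty W] (Bel : Set W → ℝ)
    (E : (W → ℝ) → ℝ) (hE : goodFunctional Bel E) : E = choquet Bel := by
  classical
  obtain ⟨hsup, haff, hmono, hcomon, hIE, hind⟩ := hE
  have hconst : ∀ c : ℝ, E (fun _ => c) = c := by
    intro c
    have h := haff (fun _ => 0) 0 c le_rfl
    simpa using h
  have hindic : ∀ (U : Set W) (a b : ℝ), 0 ≤ a →
      E (fun w => a * Set.indicator U (fun _ => (1:ℝ)) w + b) = a * Bel U + b := by
    intro U a b ha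
    rw [haff _ a b ha, hind]
  have key : ∀ n : ℕ, ∀ X : W → ℝ, (Finset.univ.image X).card = n → E X = choquet Bel X := by
    intro n
    induction n using Nat.strong_induction_on with
    | _ n ih =>
      intro X hX
      have hsne : (Finset.univ.image X).Nonempty :=
        (Finset.univ_nonempty).image X
      set s := Finset.univ.image X with hs
      set x1 := s.min' hsne with hx1
      have hx1le : ∀ w, x1 ≤ X w := fun w =>
        s.min'_le (X w) (Finset.mem_image_of_mem X (Finset.mem_univ w))
      by_cases h2 : (s.erase x1).Nonempty
      · -- inductive step
        set x2 := (s.erase x1).min' h2 with hx2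
        have hx2mem : x2 ∈ s.erase x1 := Finset.min'_mem _ h2
        have hx12 : x1 < x2 :=
          lt_of_le_of_ne (s.min'_le x2 (Finset.mem_of_mem_erase hx2mem))
            (Ne.symm (Finset.ne_of_mem_erase hx2mem))
        have hgap : ∀ w, X w ≠ x1 → x2 ≤ X w := fun w hw =>
          (s.erase x1).min'_le (X w)
            (Finset.mem_erase.2 ⟨hw, Finset.mem_image_of_mem X (Finset.mem_univ w)⟩)
        set U : Set W := {w | X w > x1} with hU
        set Y : W → ℝ := fun w => max (X w) x2 with hY
        set Z : W → ℝ := fun w => min (X w) x2 - x2 with hZ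
        have hXYZ : X = fun w => Y w + Z w := by
          funext w
          have := max_add_min (X w) x2
          simp only [hY, hZ]
          linarith
        have hcom : ∀ w w', (Y w - Y w') * (Z w - Z w') ≥ 0 := by
          intro w w'
          rcases le_total (X w) (X w') with h | h
          · have h1 : Y w ≤ Y w' := max_le_max h le_rfl
            have h2' : Z w ≤ Z w' := by
              have := min_le_min h (le_refl x2)
              simp only [hZ]; linarith
            nlinarith
          · have h1 : Y w' ≤ Y w := max_le_max h le_rfl
            have h2' : Z w' ≤ Z w := by
              have := min_le_min h (le_refl x2)
              simp only [hZ]; linarith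
            exact mul_nonneg (by linarith) (by linarith)
        have hZform : Z = fun w => (x2 - x1) * Set.indicator U (fun _ => (1:ℝ)) w + (x1 - x2) := by
          funext w
          by_cases hw : X w > x1
          · have hge : x2 ≤ X w := hgap w (ne_of_gt hw)
            have hmem : w ∈ U := hw
            rw [hZ]
            simp only [Set.indicator_of_mem hmem, min_eq_right hge]
            ring
          · have heq : X w = x1 := le_antisymm (not_lt.1 hw) (hx1le w)
            have hmem : w ∉ U := fun h => hw h
            rw [hZ]
            simp only [Set.indicator_of_notMem hmem, heq, min_eq_left (le_of_lt hx12)]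
            ring
        have hEZ : E Z = (x2 - x1) * Bel U + (x1 - x2) := by
          rw [hZform]
          exact hindic U (x2 - x1) (x1 - x2) (by linarith)
        have hEX : E X = E Y + E Z := by
          have : E (Y + Z) = E Y + E Z := hcomon Y Z hcom
          rw [hXYZ]
          exact this
        -- image of Y
        have himY : Finset.univ.image Y = s.erase x1 := by
          ext v
          simp only [Finset.mem_image, Finset.mem_univ, true_and, Finset.mem_erase]
          constructor
          · rintro ⟨w, rfl⟩
            rcases le_total (X w) x2 with h | h
            · rw [hY]; simp only [max_eq_right h]
              exact ⟨Finset.ne_of_mem_erase hx2mem, Finset.mem_of_mem_erase hx2mem⟩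
            · rw [hY]; simp only [max_eq_left h]
              refine ⟨fun hc => ?_, Finset.mem_image_of_mem X (Finset.mem_univ w)⟩
              rw [hc] at h; linarith
          · rintro ⟨hv1, hv2⟩
            obtain ⟨w, -, rfl⟩ := Finset.mem_image.1 hv2
            exact ⟨w, by rw [hY]; simp only [max_eq_left (hgap w hv1)]⟩
        have hcard : (Finset.univ.image Y).card < n := by
          rw [himY, Finset.card_erase_of_mem (s.min'_mem hsne), ← hX]
          exact Nat.sub_lt (Finset.card_pos.2 hsne) one_pos
        have hEY : E Y = choquet Bel Y := ih _ hcard Y rfl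
        -- now the choquet side
        have hsortX : s.sort (· ≤ ·) = x1 :: x2 :: ((s.erase x1).erase x2).sort (· ≤ ·) := by
          rw [sort_min_cons s hsne, ← hx1, sort_min_cons (s.erase x1) h2, ← hx2]
        have hsortY : (Finset.univ.image Y).sort (· ≤ ·)
            = x2 :: ((s.erase x1).erase x2).sort (· ≤ ·) := by
          rw [himY, sort_min_cons (s.erase x1) h2, ← hx2]
        have hcq : choquet Bel X = choquet Bel Y + ((x2 - x1) * Bel U + (x1 - x2)) := by
          rw [choquet_eq, choquet_eq, ← hs, hsortX, hsortY]
          set t := ((s.erase x1).erase x2).sort (· ≤ ·) with ht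
          simp only [List.headI, List.tail, List.zip_cons_cons, List.map_cons, List.sum_cons]
          have hmapeq : ((x2 :: t).zip t).map (fun p => (p.2 - p.1) * Bel {w | X w > p.1})
              = ((x2 :: t).zip t).map (fun p => (p.2 - p.1) * Bel {w | Y w > p.1}) := by
            refine List.map_congr_left (fun p hp => ?_)
            have hp1 : p.1 ∈ x2 :: t := (List.of_mem_zip hp).1
            have hp1' : x2 ≤ p.1 := by
              rcases List.mem_cons.1 hp1 with h | h
              · rw [h]
              · have : p.1 ∈ (s.erase x1).erase x2 := (Finset.mem_sort _).1 (ht ▸ h)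
                exact (s.erase x1).min'_le p.1 (Finset.mem_of_mem_erase this)
            have : {w | X w > p.1} = {w | Y w > p.1} := by
              ext w
              simp only [Set.mem_setOf_eq, hY, lt_max_iff]
              constructor
              · intro h; exact Or.inl h
              · rintro (h | h)
                · exact h
                · exact absurd h (not_lt.2 hp1')
            rw [this]
          rw [hmapeq]
          ring
        rw [hEX, hEY, hEZ, hcq]
      · -- base case : X is constant x1
        have hse : s = {x1} := by
          rcases (Finset.erase_eq_empty_iff s x1).1 (Finset.not_nonempty_iff_eq_empty.1 h2) with h | h
          · exact absurd h (Finset.nonempty_iff_ne_empty.1 hsne)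
          · exact h
        have hXc : X = fun _ => x1 := by
          funext w
          have : X w ∈ s := Finset.mem_image_of_mem X (Finset.mem_univ w)
          rw [hse] at this
          exact Finset.mem_singleton.1 this
        have hEX : E X = x1 := by rw [hXc]; exact hconst x1
        rw [hEX, choquet_eq, ← hs, hse, Finset.sort_singleton]
        simp
  funext X
  exact key (Finset.univ.image X).card X rfl


theorem stmt_11 {W : Type*} [Fintype W] [Nonempty W] (Bel : Set W → ℝ)
    (h0 : Bel ∅ = 0) (h1 : Bel Set.univ = 1)
    (hrange : ∀ U, 0 ≤ Bel U ∧ Bel U ≤ 1)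
    (hB3 : ∀ (n : ℕ) (U : Fin n → Set W),
      Bel (⋃ i, U i) ≥ ∑ I : Finset (Fin n),
        if I.Nonempty then (-1 : ℝ) ^ (I.card + 1) * Bel (⋂ j ∈ I, U j) else 0) :
    ∀ E : (W → ℝ) → ℝ, goodFunctional Bel E ↔ E = choquet Bel := by
  classical
  intro E
  constructor
  · exact uniq Bel E
  · intro hEq
    subst hEq
    have hgood : goodFunctional Bel (FF Bel) :=
      good_FF Bel h0 h1 (fun A hA => mob_nonneg Bel h0 (fun U => (hrange U).1) hB3 A hA)
    have hFC : FF Bel = choquet Bel := uniq Bel (FF Bel) hgood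
    rw [← hFC]
    exact hgood
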